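/- arXiv:2010.07254 — 4 statements merged into one kernel-verified Lean document; each statement's English description precedes it below -/
import Mathlib

section
/- Let k ≥ 1, m ≥ 1, ℓ ≥ 0 be integers and set n = m + k + ℓ. Let z be an (m+k) × ℓ real matrix, let Z = (𝕀_{m+k} | z) be the (m+k) × n real matrix whose first m+k columns form the identity matrix and whose last ℓ columns are z, and let Y be a k × (m+k) real matrix of rank k. Let A be the (n−m) × n real matrix whose first ℓ rows form the block matrix (−zᵀ | 𝕀_ℓ) and whose last k rows form the block matrix (Y | 0_{k×ℓ}). Then A has rank n − m, and the row span of A equals the preimage Z⁻¹(rowspan Y) = {x ∈ ℝⁿ : Zx lies in the row span of Y, viewed as a subspace of ℝ^{m+k}}. In particular, the first ℓ rows of A form a basis of ker Z. -/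
/-!
`Z = (𝕀 | z)` kills the rows of `K = (-zᵀ | 𝕀)` and sends the rows of `(Y | 0)` to the rows of `Y`.
A vector `x` with `Z x = 0` has first block `-z x₂`, so `x = Kᵀ x₂`: the rows of `K` span `ker Z`,
and they are independent because of their identity block. For any linear map `f`, a spanning
family of `ker f` together with lifts `vᵢ` of vectors `wᵢ` spans `f⁻¹(span w)`, and is independent
once the kernel part is independent and the `wᵢ` are; here the `wᵢ` are the rows of `Y`, which are
independent since `rank Y = k`.
-/

open Submodule Set

section

variable {R M N ι κ : Type*} [Ring R] [AddCommGroup M] [Module R M] [AddCommGroup N] [Module R N]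
  {f : M →ₗ[R] N} {u : ι → M} {v : κ → M}

theorem Submodule.span_range_sumElim_eq_comap_span (hu : span R (range u) = LinearMap.ker f) :
    span R (range (Sum.elim u v)) = comap f (span R (range (f ∘ v))) := by
  rw [Set.Sum.elim_range, span_union, hu, range_comp, ← map_span, comap_map_eq, sup_comm]

theorem LinearIndependent.sumElim_of_span_le_ker (hu : LinearIndependent R u)
    (hu_ker : span R (range u) ≤ LinearMap.ker f) (hv : LinearIndependent R (f ∘ v)) :
    LinearIndependent R (Sum.elim u v) :=
  hu.sum_type (hv.of_comp f) ((range_ker_disjoint hv).symm.mono_left hu_ker)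

end

namespace Matrix

theorem linearIndependent_row_of_rank_eq_card {R m n : Type*} [Field R] [Fintype m] [Fintype n]
    {M : Matrix m n R} (h : M.rank = Fintype.card m) : LinearIndependent R M.row := by
  rw [linearIndependent_iff_card_eq_finrank_span, Set.finrank, ← rank_eq_finrank_span_row, h]

theorem linearIndependent_row_fromCols_one {R l n : Type*} [Ring R] [DecidableEq l]
    (B : Matrix l n R) : LinearIndependent R (fromCols B (1 : Matrix l l R)).row := by
  refine LinearIndependent.of_comp (LinearMap.funLeft R R Sum.inr) ?_
  convert Pi.linearIndependent_single_one l R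
  ext i
  simp [one_apply, Pi.single_apply, eq_comm]

variable {R m l : Type*} [CommRing R] [Fintype m] [Fintype l] [DecidableEq m]

theorem fromCols_one_mul_transpose_fromCols_neg_transpose_one [DecidableEq l]
    (z : Matrix m l R) :
    fromCols (1 : Matrix m m R) z * (fromCols (-zᵀ) (1 : Matrix l l R))ᵀ = 0 := by
  simp [transpose_fromCols, fromCols_mul_fromRows]

theorem ker_mulVecLin_fromCols_one [DecidableEq l] (z : Matrix m l R) :
    LinearMap.ker (fromCols (1 : Matrix m m R) z).mulVecLin =
      span R (range (fromCols (-zᵀ) 1).row) := by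
  rw [← col_transpose, ← range_mulVecLin]
  refine le_antisymm (fun x hx => ?_) ?_
  · refine ⟨x ∘ Sum.inr, ?_⟩
    have hx : x ∘ Sum.inl + z *ᵥ x ∘ Sum.inr = 0 := by simpa using hx
    rw [mulVecLin_apply, transpose_fromCols, ← Sum.elim_comp_inl_inr x, fromRows_mulVec,
      eq_neg_of_add_eq_zero_left hx]
    simp [neg_mulVec]
  · rw [LinearMap.range_le_ker_iff, ← mulVecLin_mul,
      fromCols_one_mul_transpose_fromCols_neg_transpose_one, mulVecLin_zero]

theorem fromCols_one_mulVec_row_fromCols_zero {k : Type*} (z : Matrix m l R) (Y : Matrix k m R)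
    (b : k) : fromCols (1 : Matrix m m R) z *ᵥ fromCols Y 0 b = Y b := by
  rw [show fromCols Y 0 b = Sum.elim (Y b) 0 from rfl, fromCols_mulVec_sumElim]
  simp

end Matrix

open Matrix in
theorem stmt_3_general (k m ℓ : ℕ)
    (z : Matrix (Fin (m + k)) (Fin ℓ) ℝ) (Y : Matrix (Fin k) (Fin (m + k)) ℝ)
    (hY : Y.rank = k)
    (Z : Matrix (Fin (m + k)) (Fin (m + k) ⊕ Fin ℓ) ℝ)
    (hZ : Z = Matrix.fromCols 1 z)
    (A : Matrix (Fin ℓ ⊕ Fin k) (Fin (m + k) ⊕ Fin ℓ) ℝ)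
    (hA : A = Matrix.fromRows (Matrix.fromCols (-(Matrix.transpose z)) 1) (Matrix.fromCols Y 0)) :
    A.rank = ℓ + k ∧
    Submodule.span ℝ (Set.range (fun i : Fin ℓ ⊕ Fin k => A i)) =
      Submodule.comap Z.mulVecLin
        (Submodule.span ℝ (Set.range (fun a : Fin k => Y a))) ∧
    LinearIndependent ℝ (fun i : Fin ℓ => A (Sum.inl i)) ∧
    Submodule.span ℝ (Set.range (fun i : Fin ℓ => A (Sum.inl i))) =
      LinearMap.ker Z.mulVecLin := by
  subst hZ
  have hA_row : (fun i => A i) = Sum.elim (fromCols (-zᵀ) 1).row (fromCols Y 0).row := by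
    rw [hA]; rfl
  have hker := ker_mulVecLin_fromCols_one z
  have hZY : (fromCols 1 z).mulVecLin ∘ (fromCols Y 0).row = fun a => Y a :=
    funext (fromCols_one_mulVec_row_fromCols_zero z Y)
  have hY_ind : LinearIndependent ℝ fun a => Y a :=
    linearIndependent_row_of_rank_eq_card (by rw [hY, Fintype.card_fin])
  have hA_ind : LinearIndependent ℝ (fun i => A i) := by
    rw [hA_row]
    exact (linearIndependent_row_fromCols_one (-zᵀ)).sumElim_of_span_le_ker
      (f := (fromCols 1 z).mulVecLin) hker.ge (by rwa [hZY])
  refine ⟨?_, ?_, ?_, ?_⟩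
  · rw [hA_ind.rank_matrix, Fintype.card_sum, Fintype.card_fin, Fintype.card_fin]
  · rw [hA_row, ← hZY]
    exact span_range_sumElim_eq_comap_span hker.symm
  · rw [hA]
    exact linearIndependent_row_fromCols_one _
  · rw [hA, hker]
    rfl

/-- Remark 4.4(ii)-(iii): with `Z = (𝕀_{m+k} | z)` and
`A = [ -zᵀ | 𝕀_ℓ ; Y | 0 ]` (first `ℓ` rows `(-zᵀ | 𝕀_ℓ)`, last `k` rows `(Y | 0)`),
the matrix `A` has rank `ℓ + k = n - m`, its row span equals the preimage under `Z` of the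
row span of `Y`, and its first `ℓ` rows form a basis of `ker Z`. Here `ℝⁿ` is realized with
coordinates indexed by `Fin (m+k) ⊕ Fin ℓ` (first `m+k` coordinates, then the last `ℓ`). -/
theorem stmt_3 (k m ℓ : ℕ) (hk : 1 ≤ k) (hm : 1 ≤ m)
    (z : Matrix (Fin (m + k)) (Fin ℓ) ℝ) (Y : Matrix (Fin k) (Fin (m + k)) ℝ)
    (hY : Y.rank = k)
    (Z : Matrix (Fin (m + k)) (Fin (m + k) ⊕ Fin ℓ) ℝ)
    (hZ : Z = Matrix.fromCols 1 z)
    (A : Matrix (Fin ℓ ⊕ Fin k) (Fin (m + k) ⊕ Fin ℓ) ℝ)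
    (hA : A = Matrix.fromRows (Matrix.fromCols (-(Matrix.transpose z)) 1) (Matrix.fromCols Y 0)) :
    A.rank = ℓ + k ∧
    Submodule.span ℝ (Set.range (fun i : Fin ℓ ⊕ Fin k => A i)) =
      Submodule.comap Z.mulVecLin
        (Submodule.span ℝ (Set.range (fun a : Fin k => Y a))) ∧
    LinearIndependent ℝ (fun i : Fin ℓ => A (Sum.inl i)) ∧
    Submodule.span ℝ (Set.range (fun i : Fin ℓ => A (Sum.inl i))) =
      LinearMap.ker Z.mulVecLin :=
  stmt_3_general k m ℓ z Y hY Z hZ A hA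
end

section
/- Fix integers k ≥ 1 and m ≥ 0 and set N = m + k. Let Y be an N × k real matrix with columns Y₁, …, Y_k, and let P₁, …, P_k be N × (m+1) real matrices. For α, β ∈ [k] define ⟨Y^⊥_α P_β⟩ := (−1)^{α−1} times the determinant of the N × N matrix whose first k−1 columns are Y₁, …, Y_k with Y_α omitted, followed by the m+1 columns of P_β; define ⟨Y P₁ ∩ ⋯ ∩ P_k⟩ := det of the k × k matrix with (α, β) entry ⟨Y^⊥_α P_β⟩; and define v_{P_α} := Σ_{β=1}^{k} ⟨Y^⊥_β P_α⟩ · Y_β ∈ ℝ^N. Then: (a) each v_{P_α} lies in the intersection of the column span of Y and the column span of P_α; (b) ⟨Y P₁ ∩ ⋯ ∩ P_k⟩ equals the determinant of the k × k matrix of coefficients expressing v_{P₁}, …, v_{P_k} in terms of Y₁, …, Y_k; and (c) if Y has rank k, then ⟨Y P₁ ∩ ⋯ ∩ P_k⟩ = 0 if and only if the vectors v_{P₁}, …, v_{P_k} are linearly dependent. -/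
/-- The index in `Fin k` of the `j`-th remaining column after omitting column `α`
from the list of `k` columns. -/
def omitIdx {k : ℕ} (hk : 1 ≤ k) (α : Fin k) (j : Fin (k - 1)) : Fin k :=
  Fin.cast (by omega) ((Fin.cast (by omega : k = k - 1 + 1) α).succAbove j)

/-- Definition 5.1: the covariant bracket `⟨Y^⊥_α B⟩`, i.e. `(−1)^{α−1}` times the
determinant of the `(m+k) × (m+k)` matrix whose first `k−1` columns are the columns of `Y`
with the `α`-th one omitted, followed by the `m+1` columns of `B`. (Here `α : Fin k` is
`0`-indexed, so the sign is `(−1)^{(α : ℕ)}`.) -/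
noncomputable def Ybracket {k m : ℕ} (hk : 1 ≤ k)
    (Y : Matrix (Fin (m + k)) (Fin k) ℝ) (α : Fin k)
    (B : Matrix (Fin (m + k)) (Fin (m + 1)) ℝ) : ℝ :=
  (-1 : ℝ) ^ (α : ℕ) *
    (Matrix.of fun (r : Fin (m + k)) (c : Fin (m + k)) =>
      Sum.elim (fun j : Fin (k - 1) => Y r (omitIdx hk α j))
        (fun j : Fin (m + 1) => B r j)
        (finSumFinEquiv.symm (Fin.cast (by omega : m + k = k - 1 + (m + 1)) c))).det

/-!
The `m + k + 1` columns of `[Y | P_α]` live in `ℝ^{m+k}`, so the vector of their signed maximal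
minors is a linear relation among them (expand along the first row the determinant of the square
matrix obtained by repeating one row). The minors omitting a column of `Y` are exactly the
brackets `⟨Y^⊥_β P_α⟩`, so this relation writes `v_{P_α}` as a combination of the columns of
`P_α`. The bracket matrix is the transpose of the coefficient matrix of the `v_{P_α}`, and a
rank-`k` matrix `Y` is injective, which gives (b) and (c).
-/

open Matrix

theorem sum_neg_one_pow_mul_det_succAbove_smul_eq_zero {R : Type*} [CommRing R] {n : ℕ}
    (w : Fin (n + 1) → Fin n → R) :
    ∑ j : Fin (n + 1), ((-1) ^ (j : ℕ) * (of fun p q => w (j.succAbove q) p).det) • w j = 0 := by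
  funext r
  let A : Matrix (Fin (n + 1)) (Fin (n + 1)) R := of (Fin.cons (fun j => w j r) fun i j => w j i)
  have hA : A.det = 0 := det_zero_of_row_eq (Fin.succ_ne_zero r).symm (by funext j; simp [A])
  have hminor : ∀ j : Fin (n + 1),
      A.submatrix Fin.succ j.succAbove = of fun p q => w (j.succAbove q) p :=
    fun j => by ext; simp [A]
  rw [det_succ_row_zero] at hA
  simp only [hminor] at hA
  rw [Finset.sum_apply, Pi.zero_apply, ← hA]
  refine Finset.sum_congr rfl fun j _ => ?_
  simp [A]
  ring

def sumColsEquiv (k m : ℕ) : Fin k ⊕ Fin (m + 1) ≃ Fin (m + k + 1) :=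
  finSumFinEquiv.trans (finCongr (by omega))

theorem sumColsEquiv_inl_val {k m : ℕ} (β : Fin k) : (sumColsEquiv k m (.inl β) : ℕ) = β := by
  simp [sumColsEquiv]

theorem sumColsEquiv_symm_succAbove {k m : ℕ} (hk : 1 ≤ k) (β : Fin k) (q : Fin (m + k)) :
    (sumColsEquiv k m).symm ((sumColsEquiv k m (.inl β)).succAbove q) =
      Sum.map (omitIdx hk β) id (finSumFinEquiv.symm (Fin.cast (by omega) q)) := by
  rw [Equiv.symm_apply_eq]
  rcases h : finSumFinEquiv.symm (Fin.cast (by omega : m + k = k - 1 + (m + 1)) q) with j | j <;>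
  · rw [Equiv.symm_apply_eq] at h
    have hq := congrArg Fin.val h
    ext
    simp [sumColsEquiv, omitIdx, Fin.succAbove, Fin.lt_def] at hq ⊢
    split_ifs <;> simp_all <;> omega

theorem Ybracket_eq_sign_mul_det_succAbove {k m : ℕ} (hk : 1 ≤ k)
    (Y : Matrix (Fin (m + k)) (Fin k) ℝ) (B : Matrix (Fin (m + k)) (Fin (m + 1)) ℝ)
    (β : Fin k) :
    Ybracket hk Y β B = (-1) ^ (β : ℕ) * (of fun p q => Sum.elim Y.col B.col
      ((sumColsEquiv k m).symm ((sumColsEquiv k m (.inl β)).succAbove q)) p).det := by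
  unfold Ybracket
  congr 2
  ext p q
  rw [of_apply, of_apply, sumColsEquiv_symm_succAbove hk]
  rcases finSumFinEquiv.symm (Fin.cast (by omega : m + k = k - 1 + (m + 1)) q) with j | j <;> rfl

theorem mulVec_Ybracket_mem_span_cols {k m : ℕ} (hk : 1 ≤ k)
    (Y : Matrix (Fin (m + k)) (Fin k) ℝ) (B : Matrix (Fin (m + k)) (Fin (m + 1)) ℝ) :
    Y *ᵥ (fun β => Ybracket hk Y β B) ∈ Submodule.span ℝ (Set.range B.col) := by
  set w : Fin (m + k + 1) → Fin (m + k) → ℝ := Sum.elim Y.col B.col ∘ (sumColsEquiv k m).symm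
  set c : Fin (m + k + 1) → ℝ := fun i => (-1) ^ (i : ℕ) * (of fun p q => w (i.succAbove q) p).det
  have hY : ∀ β, c (sumColsEquiv k m (.inl β)) = Ybracket hk Y β B := fun β => by
    simp only [c, w, sumColsEquiv_inl_val, Ybracket_eq_sign_mul_det_succAbove hk,
      Function.comp_apply]
  have hsum : ∑ i, c i • w i = 0 := sum_neg_one_pow_mul_det_succAbove_smul_eq_zero w
  rw [← (sumColsEquiv k m).sum_comp, Fintype.sum_sum_type] at hsum
  simp only [hY, w, Function.comp_apply, Equiv.symm_apply_apply, Sum.elim_inl, Sum.elim_inr]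
    at hsum
  refine (Submodule.mem_span_range_iff_exists_fun ℝ).mpr
    ⟨fun j => -c (sumColsEquiv k m (.inr j)), ?_⟩
  rw [mulVec_eq_sum]
  simp only [op_smul_eq_smul, neg_smul, Finset.sum_neg_distrib]
  exact (eq_neg_of_add_eq_zero_left hsum).symm

theorem linearIndependent_mulVec_rows_iff_det_ne_zero {K m n : Type*} [Field K] [Fintype m]
    [Fintype n] [DecidableEq n] {Y : Matrix m n K} (hY : Y.rank = Fintype.card n)
    (M : Matrix n n K) :
    LinearIndependent K (fun i => Y *ᵥ M i) ↔ M.det ≠ 0 := by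
  have hcols : LinearIndependent K Y.col := linearIndependent_iff_card_eq_finrank_span.mpr <| by
    rw [Set.finrank, ← rank_eq_finrank_span_cols, hY]
  have hinj : Function.Injective Y.mulVecLin := mulVec_injective_iff.mpr hcols
  rw [show (fun i => Y *ᵥ M i) = Y.mulVecLin ∘ M.row from rfl,
    Y.mulVecLin.linearIndependent_iff_of_injOn hinj.injOn, linearIndependent_rows_iff_isUnit,
    isUnit_iff_isUnit_det, isUnit_iff_ne_zero]

/-- Proposition 5.2: with `⟨Y P₁ ∩ ⋯ ∩ P_k⟩ := det(⟨Y^⊥_α P_β⟩)_{α,β}` and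
`v_{P_α} := Σ_β ⟨Y^⊥_β P_α⟩ · Y_β`:
(a) each `v_{P_α}` lies in (colspan Y) ∩ (colspan P_α);
(b) `⟨Y P₁ ∩ ⋯ ∩ P_k⟩` equals the determinant of the matrix of coefficients expressing
`v_{P₁}, …, v_{P_k}` in terms of the columns `Y₁, …, Y_k`;
(c) if `Y` has rank `k`, then `⟨Y P₁ ∩ ⋯ ∩ P_k⟩ = 0` iff `v_{P₁}, …, v_{P_k}` are
linearly dependent. -/
theorem stmt_6 (k m : ℕ) (hk : 1 ≤ k)
    (Y : Matrix (Fin (m + k)) (Fin k) ℝ)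
    (P : Fin k → Matrix (Fin (m + k)) (Fin (m + 1)) ℝ) :
    (∀ α : Fin k,
      (fun r : Fin (m + k) => ∑ β : Fin k, Ybracket hk Y β (P α) * Y r β) ∈
        Submodule.span ℝ (Set.range (fun β : Fin k => fun r : Fin (m + k) => Y r β)) ⊓
          Submodule.span ℝ
            (Set.range (fun c : Fin (m + 1) => fun r : Fin (m + k) => P α r c))) ∧
    (Matrix.of fun α β : Fin k => Ybracket hk Y α (P β)).det =
      (Matrix.of fun α β : Fin k => Ybracket hk Y β (P α)).det ∧
    (Y.rank = k →
      ((Matrix.of fun α β : Fin k => Ybracket hk Y α (P β)).det = 0 ↔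
        ¬ LinearIndependent ℝ (fun α : Fin k =>
            fun r : Fin (m + k) => ∑ β : Fin k, Ybracket hk Y β (P α) * Y r β))) := by
  set M : Matrix (Fin k) (Fin k) ℝ := of fun α β => Ybracket hk Y β (P α)
  have hv : ∀ α, (fun r => ∑ β, Ybracket hk Y β (P α) * Y r β) = Y *ᵥ M α := fun α => by
    funext r
    simp [M, mulVec, dotProduct, mul_comm]
  have hdet : (of fun α β : Fin k => Ybracket hk Y α (P β)).det = M.det := det_transpose M
  have hv' : (fun α r => ∑ β, Ybracket hk Y β (P α) * Y r β) = fun α => Y *ᵥ M α := funext hv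
  refine ⟨fun α => ⟨?_, hv α ▸ mulVec_Ybracket_mem_span_cols hk Y (P α)⟩, hdet, fun hY => ?_⟩
  · rw [hv α]
    change _ ∈ Submodule.span ℝ (Set.range Y.col)
    rw [← range_mulVecLin]
    exact LinearMap.mem_range_self _ _
  · rw [hdet, hv', linearIndependent_mulVec_rows_iff_det_ne_zero (by rwa [Fintype.card_fin]),
      not_not]
end

section
/- Fix integers k ≥ 1 and m ≥ 1 and set n = m + k + 1. Let z ∈ ℝ^{m+k} be a column vector, let Z = (𝕀_{m+k} | z) be the (m+k) × n real matrix whose first m+k columns form the identity and whose last column is z (with columns Z₁, …, Z_n), and let Y be a k × (m+k) real matrix with rows Y₁, …, Y_k. Let A be the (k+1) × n real matrix whose first row is (−zᵀ, 1) and whose (α+1)-st row is (Y_α, 0) for α = 1, …, k. For j ∈ [n] let I_j = {j, …, j+k−1} (mod n, in [n]) and Ī_j = [n] \ I_j, let A^{I_j} be the (k+1) × k submatrix of A on columns I_j in increasing order, and define W^{I_j} ∈ ℝ^k by W^{I_j}_α = (−1)^α det(A^{I_j} with row α+1 deleted). For α ∈ [k] and an (m+1)-subset S ⊆ [n], set ⟨Y^⊥_α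 S⟩ := (−1)^{α−1} det of the (m+k) × (m+k) matrix whose columns are Y₁ᵀ, …, Y_kᵀ with Y_αᵀ omitted followed by Z_i for i ∈ S in increasing order, and ⟨Y S₁ ∩ ⋯ ∩ S_k⟩ := det of the k × k matrix with (α,β) entry ⟨Y^⊥_α S_β⟩. Then for every k-subset J = {j₁ < ⋯ < j_k} ⊆ [n] there exists a sign ε_J ∈ {+1, −1}, depending only on n, k, J and not on Y or z, such that for all Y and z: det(W^{I_{j₁}} | ⋯ | W^{I_{j_k}}) = ε_J · ⟨Y Ī_{j₁} ∩ ⋯ ∩ Ī_{j_k}⟩. In particular, the vectors W^{I_{j₁}}, …, W^{I_{j_k}} ∈ ℝ^k are linearly dependent if and only if ⟨Y Ī_{j₁} ∩ ⋯ ∩ Ī_{j_k}⟩ = 0. -/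
/-- The cyclic interval `I_j = {j, j+1, …, j+k-1}` (mod `n`) as a finset of `Fin n`. -/
def cyclicInterval {n : ℕ} [NeZero n] (k : ℕ) (hk : k ≤ n) (j : Fin n) :
    Finset (Fin n) :=
  Finset.image (fun t : Fin k => j + Fin.castLE hk t) Finset.univ

theorem cyclicInterval_card {n : ℕ} [NeZero n] (k : ℕ) (hk : k ≤ n) (j : Fin n) :
    (cyclicInterval k hk j).card = k := by
  unfold cyclicInterval
  rw [Finset.card_image_of_injective _
      (fun a b hab => Fin.castLE_injective hk (add_left_cancel hab)),
    Finset.card_univ, Fintype.card_fin]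

theorem cyclicInterval_compl_card {n : ℕ} [NeZero n] (k : ℕ) (hk : k ≤ n) (j : Fin n) :
    ((cyclicInterval k hk j)ᶜ).card = n - k := by
  rw [Finset.card_compl, cyclicInterval_card, Fintype.card_fin]

/-- The columns `Z₁, …, Z_n` of the matrix `Z = (𝕀_{m+k} | z)`. -/
def Zcols {m k : ℕ} (z : Fin (m + k) → ℝ) : Fin (m + k + 1) → Fin (m + k) → ℝ :=
  Fin.snoc (fun j : Fin (m + k) => fun r : Fin (m + k) => if r = j then 1 else 0) z

/-- The `(k+1) × n` matrix `A` with first row `(−zᵀ, 1)` and `(α+1)`-st row `(Y_α, 0)`. -/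
def Amat {m k : ℕ} (z : Fin (m + k) → ℝ) (Y : Matrix (Fin k) (Fin (m + k)) ℝ) :
    Matrix (Fin (k + 1)) (Fin (m + k + 1)) ℝ :=
  Matrix.of fun i : Fin (k + 1) =>
    Fin.cases (Fin.snoc (fun t : Fin (m + k) => -z t) (1 : ℝ))
      (fun a : Fin k => Fin.snoc (Y a) (0 : ℝ)) i

/-- The ray `W^{I_j} ∈ ℝ^k`, with `α`-th coordinate
`(−1)^α · det(A^{I_j} with row α+1 deleted)` (`α` 1-indexed in the paper; here
`a : Fin k` is 0-indexed, so the sign is `(−1)^{(a:ℕ)+1}`). -/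
noncomputable def Wray {m k : ℕ} (z : Fin (m + k) → ℝ)
    (Y : Matrix (Fin k) (Fin (m + k)) ℝ) (j : Fin (m + k + 1)) : Fin k → ℝ :=
  fun a => (-1 : ℝ) ^ ((a : ℕ) + 1) *
    (((Amat z Y).submatrix id
        ⇑((cyclicInterval k (by omega : k ≤ m + k + 1) j).orderEmbOfFin
          (cyclicInterval_card k (by omega) j))).submatrix
      (Fin.succAbove a.succ) id).det

/-- The covariant bracket `⟨Y^⊥_α S⟩` for an `(m+1)`-subset `S ⊆ [n]`:
`(−1)^{α−1}` times the determinant of the `(m+k) × (m+k)` matrix whose columns are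
`Y₁ᵀ, …, Y_kᵀ` with `Y_αᵀ` omitted, followed by the columns `Z_i`, `i ∈ S`, in
increasing order. -/
noncomputable def Ybr {m k : ℕ} (hk : 1 ≤ k) (z : Fin (m + k) → ℝ)
    (Y : Matrix (Fin k) (Fin (m + k)) ℝ) (α : Fin k)
    (S : Finset (Fin (m + k + 1))) (hS : S.card = m + 1) : ℝ :=
  (-1 : ℝ) ^ (α : ℕ) *
    (Matrix.of fun (r c : Fin (m + k)) =>
      Sum.elim (fun jj : Fin (k - 1) => Y (omitIdx hk α jj) r)
        (fun jj : Fin (m + 1) => Zcols z (S.orderEmbOfFin hS jj) r)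
        (finSumFinEquiv.symm
          (Fin.cast (by omega : m + k = k - 1 + (m + 1)) c))).det


open Matrix

section Determinant

variable {R : Type*} [CommRing R]

theorem Matrix.det_submatrix_equiv {ι κ : Type*} [Fintype ι] [DecidableEq ι] [Fintype κ]
    [DecidableEq κ] (X : Matrix ι ι R) (e₁ e₂ : κ ≃ ι) :
    (X.submatrix e₁ e₂).det = Equiv.Perm.sign (e₂.trans e₁.symm) * X.det := by
  have : X.submatrix e₁ e₂ = (X.submatrix e₁ e₁).submatrix id (e₂.trans e₁.symm) := by
    ext; simp
  rw [this, det_permute', det_submatrix_equiv_self]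

theorem Matrix.det_submatrix_fromRows_one_submatrix {ι κ ν : Type*} [Fintype ι] [DecidableEq ι]
    [Fintype κ] [DecidableEq κ] [Fintype ν] [DecidableEq ν]
    (A : Matrix κ ι R) (e : κ ⊕ ν ≃ ι) :
    ((fromRows A ((1 : Matrix ι ι R).submatrix (e ∘ Sum.inr) id)).submatrix id e).det =
      (A.submatrix id (e ∘ Sum.inl)).det := by
  have : (fromRows A ((1 : Matrix ι ι R).submatrix (e ∘ Sum.inr) id)).submatrix id e =
      fromBlocks (A.submatrix id (e ∘ Sum.inl)) (A.submatrix id (e ∘ Sum.inr)) 0 1 := by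
    ext (i | s) (i' | s') <;> simp [one_apply]
  rw [this, det_fromBlocks_zero₂₁, det_one, mul_one]

theorem Matrix.det_eq_det_submatrix_succ_succ {N : ℕ} (P : Matrix (Fin (N + 1)) (Fin (N + 1)) R)
    (h₀ : P 0 0 = 1) (hsucc : ∀ p : Fin N, P p.succ 0 = 0) :
    P.det = (P.submatrix Fin.succ Fin.succ).det := by
  simp [det_succ_column_zero P, Fin.sum_univ_succ, h₀, hsucc]

theorem Matrix.not_linearIndependent_cols_iff_det_eq_zero {K n : Type*} [Field K] [Fintype n]
    [DecidableEq n] (A : Matrix n n K) : ¬ LinearIndependent K (fun j i => A i j) ↔ A.det = 0 := by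
  rw [← not_ne_iff, ← isUnit_iff_ne_zero, ← isUnit_iff_isUnit_det]
  exact linearIndependent_cols_iff_isUnit.not

end Determinant

theorem Int.cast_units_mul_self {R : Type*} [Ring R] (u : ℤˣ) : ((u : ℤ) : R) * (u : ℤ) = 1 := by
  rw [← Int.cast_mul, ← Units.val_mul, Int.units_mul_self, Units.val_one, Int.cast_one]

theorem Finset.injective_sumElim_orderEmbOfFin {α : Type*} [Fintype α] [LinearOrder α]
    {s : Finset α} {k l : ℕ} (h : s.card = k) (h' : sᶜ.card = l) :
    Function.Injective (Sum.elim (s.orderEmbOfFin h) (sᶜ.orderEmbOfFin h')) := by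
  refine (s.orderEmbOfFin h).injective.sumElim (sᶜ.orderEmbOfFin h').injective fun a b hab => ?_
  have := sᶜ.orderEmbOfFin_mem h' b
  exact (Finset.mem_compl.mp this) (hab ▸ s.orderEmbOfFin_mem h a)

noncomputable def Finset.sumComplEquivOfCard {α : Type*} [Fintype α] [LinearOrder α]
    (s : Finset α) {k l : ℕ} (h : s.card = k) (h' : sᶜ.card = l) : Fin k ⊕ Fin l ≃ α :=
  Equiv.ofBijective (Sum.elim (s.orderEmbOfFin h) (sᶜ.orderEmbOfFin h')) <|
    (Fintype.bijective_iff_injective_and_card _).mpr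
      ⟨Finset.injective_sumElim_orderEmbOfFin h h', by
        simp [← h, ← h', Finset.card_add_card_compl]⟩

section Bracket

variable {m k : ℕ}

def zMatrix (z : Fin (m + k) → ℝ) : Matrix (Fin (m + k)) (Fin (m + k + 1)) ℝ :=
  Matrix.of fun p t => Zcols z t p

theorem zMatrix_mulVec_snoc (z v : Fin (m + k) → ℝ) (x : ℝ) :
    zMatrix z *ᵥ (Fin.snoc v x : Fin (m + k + 1) → ℝ) = v + x • z := by
  ext p
  simp [mulVec, dotProduct, zMatrix, Zcols, Fin.sum_univ_castSucc, mul_comm]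

theorem zMatrix_mulVec_single (z : Fin (m + k) → ℝ) (t : Fin (m + k + 1)) :
    zMatrix z *ᵥ Pi.single t 1 = Zcols z t := by
  ext p
  simp [zMatrix]

def zHat (z : Fin (m + k) → ℝ) : Matrix (Fin (m + k + 1)) (Fin (m + k + 1)) ℝ :=
  Matrix.of (vecCons (Pi.single (Fin.last (m + k)) 1) (Matrix.of.symm (zMatrix z)))

theorem det_zHat (z : Fin (m + k) → ℝ) : (zHat z).det = (-1) ^ (m + k) := by
  have hZ : (zHat z).submatrix Fin.succ (Fin.last (m + k)).succAbove = 1 := by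
    ext p q
    simp [zHat, zMatrix, Zcols, one_apply, eq_comm]
  rw [det_succ_row_zero, Finset.sum_eq_single (Fin.last (m + k))]
  · rw [hZ]
    simp [zHat]
  · intro t _ ht
    simp [zHat, ht]
  · simp

theorem zHat_mul_transpose_zero (z : Fin (m + k) → ℝ)
    (X : Matrix (Fin (m + k + 1)) (Fin (m + k + 1)) ℝ) (c : Fin (m + k + 1)) :
    (zHat z * Xᵀ) 0 c = X c (Fin.last (m + k)) := by
  simp [zHat, mul_apply, Pi.single_apply]

theorem zHat_mul_transpose_succ (z : Fin (m + k) → ℝ)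
    (X : Matrix (Fin (m + k + 1)) (Fin (m + k + 1)) ℝ) (p : Fin (m + k)) (c : Fin (m + k + 1)) :
    (zHat z * Xᵀ) p.succ c = (zMatrix z *ᵥ X c) p := by
  simp [zHat, mul_apply, mulVec, dotProduct]

theorem Amat_zero (z : Fin (m + k) → ℝ) (Y : Matrix (Fin k) (Fin (m + k)) ℝ) :
    Amat z Y 0 = Fin.snoc (-z) 1 := rfl

theorem Amat_succ (z : Fin (m + k) → ℝ) (Y : Matrix (Fin k) (Fin (m + k)) ℝ) (a : Fin k) :
    Amat z Y a.succ = Fin.snoc (Y a) 0 := rfl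

theorem zMatrix_mulVec_Amat_zero (z : Fin (m + k) → ℝ) (Y : Matrix (Fin k) (Fin (m + k)) ℝ) :
    zMatrix z *ᵥ Amat z Y 0 = 0 := by
  rw [Amat_zero, zMatrix_mulVec_snoc, one_smul, neg_add_cancel]

theorem zMatrix_mulVec_Amat_succ (z : Fin (m + k) → ℝ) (Y : Matrix (Fin k) (Fin (m + k)) ℝ)
    (a : Fin k) : zMatrix z *ᵥ Amat z Y a.succ = Y a := by
  rw [Amat_succ, zMatrix_mulVec_snoc, zero_smul, add_zero]

theorem succAbove_cast_succ_eq_omitIdx (hk : 1 ≤ k) (α : Fin k) (i : Fin (k - 1)) :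
    α.succ.succAbove (Fin.cast (by omega) i.succ) = (omitIdx hk α i).succ := by
  ext
  simp only [Fin.succAbove, omitIdx, Fin.lt_def, Fin.val_castSucc, Fin.val_cast, Fin.val_succ,
    Order.lt_add_one_iff, Order.add_one_le_iff]
  split_ifs <;> simp_all

def blockEquiv (m k : ℕ) : Fin k ⊕ Fin (m + 1) ≃ Fin (m + k + 1) :=
  finSumFinEquiv.trans (finCongr (by omega))

theorem blockEquiv_symm_zero (hk : 1 ≤ k) : (blockEquiv m k).symm 0 = .inl ⟨0, hk⟩ := by
  rw [Equiv.symm_apply_eq]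
  ext
  simp [blockEquiv]

theorem blockEquiv_symm_succ (hk : 1 ≤ k) (q : Fin (m + k)) :
    (blockEquiv m k).symm q.succ =
      Sum.map (fun i : Fin (k - 1) => Fin.cast (by omega) i.succ) id
        (finSumFinEquiv.symm (Fin.cast (by omega : m + k = k - 1 + (m + 1)) q)) := by
  rcases h : finSumFinEquiv.symm (Fin.cast (by omega : m + k = k - 1 + (m + 1)) q) with i | s <;>
    rw [Equiv.symm_apply_eq, Fin.ext_iff] at h ⊢ <;>
    simp only [blockEquiv, Equiv.trans_apply, finCongr_apply, Sum.map_inl, Sum.map_inr, id_eq,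
      finSumFinEquiv_apply_left, finSumFinEquiv_apply_right, Fin.val_cast, Fin.val_castAdd,
      Fin.val_natAdd, Fin.val_succ] at h ⊢ <;>
    omega

noncomputable def intervalSumComplEquiv (m k : ℕ) (j : Fin (m + k + 1)) :
    Fin k ⊕ Fin (m + 1) ≃ Fin (m + k + 1) :=
  (cyclicInterval k (by omega) j).sumComplEquivOfCard (cyclicInterval_card k _ j)
    (by rw [cyclicInterval_compl_card]; omega)

noncomputable def raySign (m k : ℕ) (j : Fin (m + k + 1)) : ℤˣ :=
  (-1) ^ (m + k + 1) *
    Equiv.Perm.sign ((intervalSumComplEquiv m k j).trans (blockEquiv m k).symm)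

noncomputable def completedMinor (z : Fin (m + k) → ℝ) (Y : Matrix (Fin k) (Fin (m + k)) ℝ)
    (j : Fin (m + k + 1)) (α : Fin k) : Matrix (Fin k ⊕ Fin (m + 1)) (Fin (m + k + 1)) ℝ :=
  fromRows ((Amat z Y).submatrix α.succ.succAbove id)
    ((1 : Matrix _ _ ℝ).submatrix (intervalSumComplEquiv m k j ∘ Sum.inr) id)

theorem completedMinor_inl (z : Fin (m + k) → ℝ) (Y : Matrix (Fin k) (Fin (m + k)) ℝ)
    (j : Fin (m + k + 1)) (α : Fin k) (i : Fin k) :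
    completedMinor z Y j α (.inl i) = Amat z Y (α.succ.succAbove i) := rfl

theorem completedMinor_inr (z : Fin (m + k) → ℝ) (Y : Matrix (Fin k) (Fin (m + k)) ℝ)
    (j : Fin (m + k + 1)) (α : Fin k) (s : Fin (m + 1)) :
    completedMinor z Y j α (.inr s) =
      Pi.single ((cyclicInterval k (by omega) j)ᶜ.orderEmbOfFin
        (by rw [cyclicInterval_compl_card]; omega) s) 1 := by
  ext t
  simp [completedMinor, one_apply, Pi.single_apply, eq_comm, intervalSumComplEquiv,
    Finset.sumComplEquivOfCard]

theorem Wray_eq_det_completedMinor (z : Fin (m + k) → ℝ) (Y : Matrix (Fin k) (Fin (m + k)) ℝ)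
    (j : Fin (m + k + 1)) (α : Fin k) :
    Wray z Y j α = (-1) ^ ((α : ℕ) + 1) *
      ((completedMinor z Y j α).submatrix id (intervalSumComplEquiv m k j)).det := by
  rw [completedMinor, det_submatrix_fromRows_one_submatrix]
  rfl

noncomputable def borderedMinor (z : Fin (m + k) → ℝ) (Y : Matrix (Fin k) (Fin (m + k)) ℝ)
    (j : Fin (m + k + 1)) (α : Fin k) : Matrix (Fin (m + k + 1)) (Fin (m + k + 1)) ℝ :=
  (completedMinor z Y j α).submatrix (blockEquiv m k).symm id

theorem borderedMinor_zero (hk : 1 ≤ k) (z : Fin (m + k) → ℝ)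
    (Y : Matrix (Fin k) (Fin (m + k)) ℝ) (j : Fin (m + k + 1)) (α : Fin k) :
    borderedMinor z Y j α 0 = Amat z Y 0 := by
  have : NeZero k := ⟨by omega⟩
  rw [show borderedMinor z Y j α 0 = completedMinor z Y j α ((blockEquiv m k).symm 0) from rfl,
    blockEquiv_symm_zero hk, completedMinor_inl]
  exact congrArg _ (Fin.succ_succAbove_zero α)

theorem zMatrix_mulVec_borderedMinor_succ (hk : 1 ≤ k) (z : Fin (m + k) → ℝ)
    (Y : Matrix (Fin k) (Fin (m + k)) ℝ) (j : Fin (m + k + 1)) (α : Fin k) (q : Fin (m + k)) :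
    zMatrix z *ᵥ borderedMinor z Y j α q.succ = fun r =>
      Sum.elim (fun i : Fin (k - 1) => Y (omitIdx hk α i) r)
        (fun s : Fin (m + 1) => Zcols z ((cyclicInterval k (by omega) j)ᶜ.orderEmbOfFin
          (by rw [cyclicInterval_compl_card]; omega) s) r)
        (finSumFinEquiv.symm (Fin.cast (by omega : m + k = k - 1 + (m + 1)) q)) := by
  ext r
  rw [show borderedMinor z Y j α q.succ = completedMinor z Y j α ((blockEquiv m k).symm q.succ)
    from rfl, blockEquiv_symm_succ hk]
  cases finSumFinEquiv.symm (Fin.cast (by omega : m + k = k - 1 + (m + 1)) q) with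
  | inl i =>
    rw [Sum.map_inl, completedMinor_inl, succAbove_cast_succ_eq_omitIdx hk,
      zMatrix_mulVec_Amat_succ]
    rfl
  | inr s => rw [Sum.map_inr, completedMinor_inr, zMatrix_mulVec_single]; rfl

theorem det_completedMinor_submatrix (z : Fin (m + k) → ℝ) (Y : Matrix (Fin k) (Fin (m + k)) ℝ)
    (j : Fin (m + k + 1)) (α : Fin k) :
    ((completedMinor z Y j α).submatrix id (intervalSumComplEquiv m k j)).det =
      Equiv.Perm.sign ((intervalSumComplEquiv m k j).trans (blockEquiv m k).symm) *
        (borderedMinor z Y j α).det := by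
  rw [borderedMinor, ← det_submatrix_equiv _ (blockEquiv m k)]
  simp

theorem Ybr_compl_cyclicInterval (hk : 1 ≤ k) (z : Fin (m + k) → ℝ)
    (Y : Matrix (Fin k) (Fin (m + k)) ℝ) (j : Fin (m + k + 1)) (α : Fin k) :
    Ybr hk z Y α (cyclicInterval k (by omega) j)ᶜ (by rw [cyclicInterval_compl_card]; omega) =
      ((raySign m k j : ℤ) : ℝ) * Wray z Y j α := by
  set X := borderedMinor z Y j α
  have hYbr : Ybr hk z Y α (cyclicInterval k (by omega) j)ᶜ
      (by rw [cyclicInterval_compl_card]; omega) = (-1) ^ (α : ℕ) * (zHat z * Xᵀ).det := by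
    rw [det_eq_det_submatrix_succ_succ _
        (by simp [X, zHat_mul_transpose_zero, borderedMinor_zero hk, Amat_zero])
        (fun p => by simp [X, zHat_mul_transpose_succ, borderedMinor_zero hk,
          zMatrix_mulVec_Amat_zero]), Ybr]
    congr 2
    ext r c
    simp [X, zHat_mul_transpose_succ, zMatrix_mulVec_borderedMinor_succ hk]
  rw [hYbr, det_mul, det_transpose, det_zHat, Wray_eq_det_completedMinor,
    det_completedMinor_submatrix, raySign]
  push_cast
  linear_combination (-(-1) ^ (α : ℕ) * (-1) ^ (m + k) * X.det) *
    Int.cast_units_mul_self (R := ℝ)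
      (Equiv.Perm.sign ((intervalSumComplEquiv m k j).trans (blockEquiv m k).symm))

end Bracket

/-- Theorem 5.4: for every `k`-subset `J = {j₁ < ⋯ < j_k}` of `[n]` (`n = m+k+1`) there is
a sign `ε` depending only on `n, k, J` such that for all `Y` and `z`,
`det(W^{I_{j₁}} | ⋯ | W^{I_{j_k}}) = ε · ⟨Y Ī_{j₁} ∩ ⋯ ∩ Ī_{j_k}⟩`, where
`⟨Y S₁ ∩ ⋯ ∩ S_k⟩ = det(⟨Y^⊥_α S_β⟩)_{α,β}`. In particular the vectors
`W^{I_{j₁}}, …, W^{I_{j_k}}` are linearly dependent iff `⟨Y Ī_{j₁} ∩ ⋯ ∩ Ī_{j_k}⟩ = 0`. -/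
theorem stmt_8 (k m : ℕ) (hk : 1 ≤ k)
    (J : Finset (Fin (m + k + 1))) (hJ : J.card = k) :
    ∃ ε : ℝ, (ε = 1 ∨ ε = -1) ∧
      ∀ (z : Fin (m + k) → ℝ) (Y : Matrix (Fin k) (Fin (m + k)) ℝ),
        (Matrix.of fun (a b : Fin k) =>
            Wray z Y (J.orderEmbOfFin hJ b) a).det =
          ε * (Matrix.of fun (α β : Fin k) =>
            Ybr hk z Y α ((cyclicInterval k (by omega) (J.orderEmbOfFin hJ β))ᶜ)
              (by rw [cyclicInterval_compl_card]; omega)).det ∧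
        (¬ LinearIndependent ℝ
            (fun b : Fin k => Wray z Y (J.orderEmbOfFin hJ b)) ↔
          (Matrix.of fun (α β : Fin k) =>
            Ybr hk z Y α ((cyclicInterval k (by omega) (J.orderEmbOfFin hJ β))ᶜ)
              (by rw [cyclicInterval_compl_card]; omega)).det = 0) := by
  set u : ℤˣ := ∏ b, raySign m k (J.orderEmbOfFin hJ b)
  have hu : ((u : ℤ) : ℝ) * (u : ℤ) = 1 := Int.cast_units_mul_self u
  refine ⟨(u : ℤ), by rcases Int.units_eq_one_or u with h | h <;> simp [h], fun z Y => ?_⟩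
  set W := Matrix.of fun (a b : Fin k) => Wray z Y (J.orderEmbOfFin hJ b) a
  have hW (α β : Fin k) : Wray z Y (J.orderEmbOfFin hJ β) α = W α β := rfl
  simp only [Ybr_compl_cyclicInterval hk, hW]
  have hprod : ∏ b, ((raySign m k (J.orderEmbOfFin hJ b) : ℤ) : ℝ) = (u : ℤ) := by simp [u]
  rw [det_mul_row, hprod, ← mul_assoc, hu, one_mul,
    mul_eq_zero_iff_left (left_ne_zero_of_mul_eq_one hu)]
  exact ⟨rfl, not_linearIndependent_cols_iff_det_eq_zero W⟩
end

section
/- Let Q ⊆ ℝⁿ be a nonempty compact convex set, π : ℝⁿ → ℝᵐ a linear map, and ψ : ℝⁿ → ℝ a linear functional such that for every x ∈ π(Q) the maximum of ψ over the fiber Q ∩ π⁻¹(x) is attained at a unique point s_ψ(x). Let Γ ⊆ Q be a nonempty compact convex subset (for example, a face of Q), and suppose that for some x₀ ∈ π(Q) the point s_ψ(x₀) belongs to the relative interior (intrinsic interior) of Γ. Then s_ψ(x) ∈ Γ for every x ∈ π(Γ). -/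
/-!
If `s(π γ) ≠ γ` for some `γ ∈ Γ`, push `γ` through `p = s(x₀)` to a point `z ∈ Γ`, so that `p`
lies strictly between `γ` and `z`. Replacing `γ` by `s(π γ)` in this convex combination stays in
`Q`, stays in the fibre over `x₀`, and increases `ψ`, contradicting the maximality of `p`.
-/

open AffineMap Topology

theorem exists_mem_openSegment_of_mem_intrinsicInterior {E : Type*} [AddCommGroup E]
    [Module ℝ E] [TopologicalSpace E] [IsTopologicalAddGroup E] [ContinuousSMul ℝ E]
    {Γ : Set E} {p γ : E} (hp : p ∈ intrinsicInterior ℝ Γ) (hγ : γ ∈ Γ) :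
    ∃ z ∈ Γ, p ∈ openSegment ℝ γ z := by
  obtain ⟨⟨p, hpA⟩, hpint, rfl⟩ := mem_intrinsicInterior.1 hp
  let c : ℝ → affineSpan ℝ Γ := fun t =>
    ⟨lineMap γ p t, lineMap_mem t (subset_affineSpan ℝ Γ hγ) hpA⟩
  have hc : Continuous c := lineMap_continuous.subtype_mk _
  have hc1 : c 1 = ⟨p, hpA⟩ := Subtype.ext (lineMap_apply_one γ p)
  have hnear : ∀ᶠ t in 𝓝[>] 1, c t ∈ interior ((↑) ⁻¹' Γ) :=
    nhdsWithin_le_nhds (hc.continuousAt.preimage_mem_nhds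
      (isOpen_interior.mem_nhds (hc1 ▸ hpint)))
  obtain ⟨t, hct, ht⟩ := (hnear.and self_mem_nhdsWithin).exists
  refine ⟨c t, (interior_subset hct : c t ∈ (↑) ⁻¹' Γ), ?_⟩
  have ht0 : (0 : ℝ) < t := zero_lt_one.trans ht
  rw [openSegment_eq_image_lineMap]
  refine ⟨t⁻¹, ⟨inv_pos.2 ht0, inv_lt_one_of_one_lt₀ ht⟩, ?_⟩
  rw [lineMap_lineMap_right, inv_mul_cancel₀ ht0.ne', lineMap_apply_one]

theorem isMaxOn_fiber_of_mem_openSegment {𝕜 E F : Type*} [Field 𝕜] [LinearOrder 𝕜]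
    [IsStrictOrderedRing 𝕜] [AddCommGroup E] [Module 𝕜 E] [AddCommGroup F] [Module 𝕜 F]
    {Q : Set E} (hQ : Convex 𝕜 Q) (π : E →ₗ[𝕜] F) (ψ : E →ₗ[𝕜] 𝕜) {p γ z : E}
    (hp : IsMaxOn ψ (Q ∩ π ⁻¹' {π p}) p) (hpseg : p ∈ openSegment 𝕜 γ z) (hz : z ∈ Q) :
    IsMaxOn ψ (Q ∩ π ⁻¹' {π γ}) γ := by
  rintro y ⟨hy, hyγ : π y = π γ⟩
  obtain ⟨a, b, ha, hb, hab, rfl⟩ := hpseg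
  have hw : b • z + a • y ∈ Q := hQ hz hy hb.le ha.le (by rw [add_comm, hab])
  have hπw : π (b • z + a • y) = π (a • γ + b • z) := by
    simp only [map_add, map_smul, hyγ, add_comm]
  have hψ : ψ (b • z + a • y) ≤ ψ (a • γ + b • z) := hp ⟨hw, hπw⟩
  simp only [map_add, map_smul, smul_eq_mul] at hψ
  exact le_of_mul_le_mul_left (by linarith) ha

theorem stmt_13_general (n m : ℕ) (Q : Set (Fin n → ℝ))
    (hQconv : Convex ℝ Q)
    (π : (Fin n → ℝ) →ₗ[ℝ] (Fin m → ℝ)) (ψ : (Fin n → ℝ) →ₗ[ℝ] ℝ)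
    (s : (Fin m → ℝ) → (Fin n → ℝ))
    (hs : ∀ x ∈ π '' Q, s x ∈ Q ∧ π (s x) = x ∧
      ∀ q ∈ Q, π q = x → q ≠ s x → ψ q < ψ (s x))
    (Γ : Set (Fin n → ℝ)) (hΓQ : Γ ⊆ Q)
    (x₀ : Fin m → ℝ) (hx₀ : x₀ ∈ π '' Q)
    (hs₀ : s x₀ ∈ intrinsicInterior ℝ Γ) :
    ∀ x ∈ π '' Γ, s x ∈ Γ := by
  rintro x ⟨γ, hγ, rfl⟩
  obtain ⟨-, hpπ, hpmax⟩ := hs x₀ hx₀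
  have hp : IsMaxOn ψ (Q ∩ π ⁻¹' {π (s x₀)}) (s x₀) := by
    rintro q ⟨hq, hqπ : π q = π (s x₀)⟩
    rcases eq_or_ne q (s x₀) with rfl | hne
    · exact le_refl (ψ (s x₀))
    · exact (hpmax q hq (hqπ.trans hpπ) hne).le
  obtain ⟨z, hz, hpseg⟩ := exists_mem_openSegment_of_mem_intrinsicInterior hs₀ hγ
  have hγmax := isMaxOn_fiber_of_mem_openSegment hQconv π ψ hp hpseg (hΓQ hz)
  obtain ⟨hyQ, hyπ, hymax⟩ := hs (π γ) ⟨γ, hΓQ hγ, rfl⟩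
  have hsγ : s (π γ) = γ := by
    by_contra hne
    exact (hymax γ (hΓQ hγ) rfl (Ne.symm hne)).not_ge (hγmax ⟨hyQ, hyπ⟩)
  rwa [hsγ]

/-- The key geometric claim in the proof of Theorem 2.5 (after Billera–Sturmfels): let
`Q ⊆ ℝⁿ` be a nonempty compact convex set, `π : ℝⁿ → ℝᵐ` linear, `ψ : ℝⁿ → ℝ` a linear
functional, and suppose for each `x ∈ π(Q)` the maximum of `ψ` over the fiber
`Q ∩ π⁻¹(x)` is attained at the unique point `s(x)`. If `Γ ⊆ Q` is a nonempty compact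
convex subset and `s(x₀)` lies in the relative (intrinsic) interior of `Γ` for some
`x₀ ∈ π(Q)`, then `s(x) ∈ Γ` for every `x ∈ π(Γ)`. -/
theorem stmt_13 (n m : ℕ) (Q : Set (Fin n → ℝ)) (hQne : Q.Nonempty)
    (hQc : IsCompact Q) (hQconv : Convex ℝ Q)
    (π : (Fin n → ℝ) →ₗ[ℝ] (Fin m → ℝ)) (ψ : (Fin n → ℝ) →ₗ[ℝ] ℝ)
    (s : (Fin m → ℝ) → (Fin n → ℝ))
    (hs : ∀ x ∈ π '' Q, s x ∈ Q ∧ π (s x) = x ∧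
      ∀ q ∈ Q, π q = x → q ≠ s x → ψ q < ψ (s x))
    (Γ : Set (Fin n → ℝ)) (hΓQ : Γ ⊆ Q) (hΓne : Γ.Nonempty)
    (hΓc : IsCompact Γ) (hΓconv : Convex ℝ Γ)
    (x₀ : Fin m → ℝ) (hx₀ : x₀ ∈ π '' Q)
    (hs₀ : s x₀ ∈ intrinsicInterior ℝ Γ) :
    ∀ x ∈ π '' Γ, s x ∈ Γ :=
  stmt_13_general n m Q hQconv π ψ s hs Γ hΓQ x₀ hx₀ hs₀
end
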